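/- det(B_n) = Σ_{k=1}^{n} w(k) μ(k), where μ is the Möbius function. -/

import Mathlib

/-- The Dirichlet matrix `D_n` for `a ≡ 1`: its `(i,j)` entry (with `1 ≤ i, j ≤ n`,
realized via `Fin n` shifted by one) is `1` if `i ∣ j` and `0` otherwise. -/
def Dmat (n : ℕ) : Matrix (Fin n) (Fin n) ℂ :=
  fun i j => if (i.val + 1) ∣ (j.val + 1) then 1 else 0

/-- The weight matrix `W_n`: its `(i,1)` entry is `w i` for `2 ≤ i ≤ n`
and all other entries are `0`. -/
def Wmat (n : ℕ) (w : ℕ → ℂ) : Matrix (Fin n) (Fin n) ℂ :=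
  fun i j => if j.val = 0 ∧ i.val ≠ 0 then w (i.val + 1) else 0

/-- `B_n = W_n + D_n` (the case `a ≡ 1` of the matrix `A_n`). -/
def Bmat (n : ℕ) (w : ℕ → ℂ) : Matrix (Fin n) (Fin n) ℂ :=
  Wmat n w + Dmat n

/-! `B_n` is `D_n` with its first column replaced by `v = (w(1), …, w(n))`, because the first
column of `D_n` is `e_1` and `w(1) = 1`. The row vector `(μ(1), …, μ(n))` times `D_n` is `e_1ᵀ`,
since `∑_{d ∣ j} μ(d) = [j = 1]` and every divisor of `j ≤ n` is itself at most `n`. As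
`det D_n = 1`, Cramer's rule says `det B_n = x_1` for the solution of `D_n x = v`, and
`x_1 = μ D_n x = μ · v`. -/

open ArithmeticFunction Finset Matrix
open scoped ArithmeticFunction.Moebius

theorem Matrix.det_updateCol_eq_det_mul_dotProduct {ι R : Type*} [Fintype ι] [DecidableEq ι]
    [CommRing R] {A : Matrix ι ι R} {r : ι → R} {k : ι} (hr : r ᵥ* A = Pi.single k 1)
    (v : ι → R) : (A.updateCol k v).det = A.det * (r ⬝ᵥ v) := by
  rw [← cramer_apply]
  calc cramer A v k = (r ᵥ* A) ⬝ᵥ cramer A v := by rw [hr, single_dotProduct, one_mul]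
    _ = r ⬝ᵥ (A *ᵥ cramer A v) := (dotProduct_mulVec r A _).symm
    _ = A.det * (r ⬝ᵥ v) := by rw [mulVec_cramer, dotProduct_smul, smul_eq_mul]

theorem Fin.sum_univ_add_one_eq_sum_Icc {M : Type*} [AddCommMonoid M] (n : ℕ) (f : ℕ → M) :
    ∑ i : Fin n, f (i + 1) = ∑ k ∈ Icc 1 n, f k := by
  rw [Fin.sum_univ_eq_sum_range (fun i => f (i + 1)), range_eq_Ico, sum_Ico_add' f 0 n 1,
    zero_add, Ico_add_one_right_eq_Icc]

theorem Nat.filter_dvd_Icc_eq_divisors {m n : ℕ} (hm : m ≠ 0) (hmn : m ≤ n) :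
    {k ∈ Icc 1 n | k ∣ m} = m.divisors := by
  ext k
  simp only [mem_filter, mem_Icc, Nat.mem_divisors]
  constructor
  · rintro ⟨-, hk⟩
    exact ⟨hk, hm⟩
  · rintro ⟨hk, -⟩
    have hm : 0 < m := Nat.pos_of_ne_zero hm
    exact ⟨⟨Nat.pos_of_dvd_of_pos hk hm, (Nat.le_of_dvd hm hk).trans hmn⟩, hk⟩

theorem ArithmeticFunction.sum_divisors_moebius {R : Type*} [Ring R] (m : ℕ) :
    ∑ d ∈ m.divisors, (μ d : R) = if m = 1 then 1 else 0 := by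
  have h := congrArg (fun f : ArithmeticFunction R => f m) coe_moebius_mul_coe_zeta
  simpa only [coe_mul_zeta_apply, intCoe_apply, ArithmeticFunction.one_apply] using h

theorem Dmat_blockTriangular (n : ℕ) : (Dmat n).BlockTriangular id := by
  intro i j hji
  have hji : (j : ℕ) + 1 < i + 1 := Nat.succ_lt_succ hji
  simp [Dmat, Nat.not_dvd_of_pos_of_lt (Nat.succ_pos _) hji]

theorem det_Dmat (n : ℕ) : (Dmat n).det = 1 :=
  (det_of_isUpperTriangular (Dmat_blockTriangular n)).trans
    (prod_eq_one fun i _ => by simp [Dmat])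

theorem moebius_vecMul_Dmat {n : ℕ} (hn : 0 < n) :
    (fun i : Fin n => (μ (i + 1) : ℂ)) ᵥ* Dmat n = Pi.single ⟨0, hn⟩ 1 := by
  ext j
  have hj : (j : ℕ) + 1 ≤ n := j.isLt
  calc ((fun i : Fin n => (μ (i + 1) : ℂ)) ᵥ* Dmat n) j
        = ∑ k ∈ Icc 1 n, if k ∣ j + 1 then (μ k : ℂ) else 0 := by
          rw [vecMul, dotProduct, ← Fin.sum_univ_add_one_eq_sum_Icc]
          simp [Dmat]
    _ = ∑ d ∈ (j + 1 : ℕ).divisors, (μ d : ℂ) := by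
          rw [← sum_filter, Nat.filter_dvd_Icc_eq_divisors (Nat.succ_ne_zero _) hj]
    _ = (Pi.single (⟨0, hn⟩ : Fin n) (1 : ℂ) : Fin n → ℂ) j := by
          simp [sum_divisors_moebius, Pi.single_apply, Fin.ext_iff]

theorem Bmat_eq_updateCol {n : ℕ} (hn : 0 < n) {w : ℕ → ℂ} (hw : w 1 = 1) :
    Bmat n w = (Dmat n).updateCol ⟨0, hn⟩ (fun i => w (i + 1)) := by
  ext i j
  rcases eq_or_ne j ⟨0, hn⟩ with rfl | hj
  · rcases eq_or_ne (i : ℕ) 0 with hi | hi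
    · simp [Bmat, Wmat, Dmat, hi, hw]
    · simp [Bmat, Wmat, Dmat, hi]
  · have hj0 : (j : ℕ) ≠ 0 := fun h => hj (Fin.ext h)
    simp [Bmat, Wmat, Dmat, hj0, updateCol_ne hj]

/-- `det B_n = ∑_{k=1}^{n} w k * μ k`, where `μ` is the Möbius function. -/
theorem det_Bmat (n : ℕ) (hn : 1 ≤ n) (w : ℕ → ℂ) (hw : w 1 = 1) :
    (Bmat n w).det = ∑ k ∈ Finset.Icc 1 n, w k * (ArithmeticFunction.moebius k : ℂ) := by
  rw [Bmat_eq_updateCol hn hw, det_updateCol_eq_det_mul_dotProduct (moebius_vecMul_Dmat hn),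
    det_Dmat, one_mul, dotProduct, ← Fin.sum_univ_add_one_eq_sum_Icc]
  exact sum_congr rfl fun i _ => mul_comm _ _
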